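/- arXiv:1508.03034 — 6 statements merged into one kernel-verified Lean document; each statement's English description precedes it below -/
import Mathlib

section
/- Let A be the free associative unital k-algebra on X and M = ⊕_{y∈Y} A·y a free left A-module with |Y| ≥ 1. If V ≤ M is a fully invariant submodule (invariant under all endomorphisms of the free representation fixing the generators of sort 1 pointwise), and for some y ∈ Y one writes V ∩ A·y = S_y·y with S_y ⊆ A, then S_y is a two-sided ideal of A. -/
/-- Let `A` be the free associative unital `k`-algebra on `X` and `M = ⊕_{y ∈ Y} A·y` the free
left `A`-module on a basis `Y` (realized as `Y →₀ A`), with `Y` nonempty.  If `V ≤ M` is a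
fully invariant submodule — invariant under every `A`-module endomorphism of `M` induced by an
arbitrary assignment `Y → M` (the sort-1 generators being fixed) — then for each `y ∈ Y` the
set `S_y = {a ∈ A : a·y ∈ V}` is a two-sided ideal of `A`. -/
theorem stmt_1 (k : Type*) [Field k] (X Y : Type*) [Nonempty Y]
    (V : Submodule (FreeAlgebra k X) (Y →₀ FreeAlgebra k X))
    (hinv : ∀ g : Y → (Y →₀ FreeAlgebra k X), ∀ v ∈ V,
      Finsupp.lsum ℕ
        (fun y => LinearMap.toSpanSingleton (FreeAlgebra k X) (Y →₀ FreeAlgebra k X) (g y))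
        v ∈ V)
    (y : Y) :
    ∃ S : TwoSidedIdeal (FreeAlgebra k X),
      ∀ a : FreeAlgebra k X, a ∈ S ↔ Finsupp.single y a ∈ V := by
  refine ⟨TwoSidedIdeal.mk' {a | Finsupp.single y a ∈ V} (by simp [V.zero_mem])
    (fun {a b} ha hb => by simpa [Finsupp.single_add] using V.add_mem ha hb)
    (fun {a} ha => by simpa using V.neg_mem ha)
    (fun {a b} hb => by
      have := V.smul_mem a hb
      simpa [Finsupp.smul_single'] using this)
    (fun {a b} ha => by
      have := hinv (fun _ => Finsupp.single y b) _ ha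
      simpa [Finsupp.smul_single'] using this),
    fun a => TwoSidedIdeal.mem_mk' _ _ _ _ _ _ a⟩
end

section
/- With notation as before, the ideals S_y := {a ∈ A : a·y ∈ V} coincide for all y ∈ Y; i.e., there is a single two-sided ideal S of A with V = ⊕_{y∈Y} S·y. -/
lemma stmt2_aux (k : Type*) [Field k] (X Y : Type*) [DecidableEq Y] (y : Y) :
    Finsupp.lsum ℕ
      (fun z => LinearMap.toSpanSingleton (FreeAlgebra k X) (Y →₀ FreeAlgebra k X)
        (if z = y then Finsupp.single y 1 else 0)) =
    (Finsupp.lsingle y).comp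
      (Finsupp.lapply y : (Y →₀ FreeAlgebra k X) →ₗ[FreeAlgebra k X] FreeAlgebra k X) := by
  apply Finsupp.lhom_ext
  intro z a
  simp only [Finsupp.lsum_single, LinearMap.toSpanSingleton_apply, LinearMap.comp_apply,
    Finsupp.lapply_apply, Finsupp.lsingle_apply, Finsupp.single_apply]
  split_ifs with h
  · subst h; simp [Finsupp.smul_single]
  · simp [Ne.symm h]

/-- With `A` the free associative unital `k`-algebra on `X` and `M = ⊕_{y ∈ Y} A·y` the free
left `A`-module on `Y` (realized as `Y →₀ A`), let `V ≤ M` be a submodule invariant under all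
`A`-module endomorphisms of `M` induced by arbitrary assignments `Y → M` (the algebra
generators being fixed).  Then the ideals `S_y = {a ∈ A : a·y ∈ V}` coincide for all `y ∈ Y`,
and `V = ⊕_{y ∈ Y} S·y`, i.e. `V` is the direct sum of its intersections with the cyclic
submodules `A·y`. -/
theorem stmt_2 (k : Type*) [Field k] (X Y : Type*)
    (V : Submodule (FreeAlgebra k X) (Y →₀ FreeAlgebra k X))
    (hinv : ∀ g : Y → (Y →₀ FreeAlgebra k X), ∀ v ∈ V,
      Finsupp.lsum ℕ
        (fun y => LinearMap.toSpanSingleton (FreeAlgebra k X) (Y →₀ FreeAlgebra k X) (g y))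
        v ∈ V) :
    (∀ y y' : Y, ∀ a : FreeAlgebra k X,
        Finsupp.single y a ∈ V ↔ Finsupp.single y' a ∈ V) ∧
      V = ⨆ y : Y, V ⊓ LinearMap.range
        (Finsupp.lsingle y : FreeAlgebra k X →ₗ[FreeAlgebra k X] (Y →₀ FreeAlgebra k X)) := by
  classical
  have key : ∀ y y' : Y, ∀ a : FreeAlgebra k X,
      Finsupp.single y a ∈ V → Finsupp.single y' a ∈ V := by
    intro y y' a h
    have := hinv (fun _ => Finsupp.single y' 1) _ h
    simpa [Finsupp.lsum_single, LinearMap.toSpanSingleton_apply, Finsupp.smul_single] using this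
  have hcomp : ∀ y : Y, ∀ v ∈ V, Finsupp.single y (v y) ∈ V := by
    intro y v hv
    have := hinv (fun z => if z = y then Finsupp.single y 1 else 0) v hv
    rwa [stmt2_aux k X Y y] at this
  refine ⟨fun y y' a => ⟨key y y' a, key y' y a⟩, le_antisymm ?_ (iSup_le fun y => inf_le_left)⟩
  intro v hv
  have hrepr : v = ∑ y ∈ v.support, Finsupp.single y (v y) := (Finsupp.sum_single v).symm
  rw [hrepr]
  refine Submodule.sum_mem _ fun y _ => ?_
  refine Submodule.mem_iSup_of_mem y ⟨hcomp y v hv, ⟨v y, rfl⟩⟩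
end

section
/- Let Θ be an action-type, nondegenerate variety of Lie algebra representations over a field k of characteristic 0, and let F = F_Θ(x^(1), x^(2)) be the free representation on one generator of each sort. Suppose W is a system of words defining verbal operations with w_{λ^(1)} = φ(λ)x^(1), w_{λ^(2)} = ψ(λ)x^(2) for field automorphisms φ, ψ ∈ Aut(k), and w_∘ = b(x^(1) ∘ x^(2)) with b ∈ k^*. If there is a bijection s_F : F → F fixing the generators that is an isomorphism F → F*_W, then φ = ψ, derived from the identity (λx^(1)) ∘ x^(2) = x^(1) ∘ (λx^(2)) holding in F. -/
open Polynomial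

set_option synthInstance.maxHeartbeats 400000

attribute [local instance 100] LieRing.ofAssociativeRing

/-- The sort-2 part `A_Θ·x⁽²⁾ = k[x]/(x^d)` of the free representation
`F_Θ(x⁽¹⁾, x⁽²⁾)` of an action-type nondegenerate variety `Θ`. -/
noncomputable abbrev AΘ (k : Type*) [Field k] (d : ℕ) : Type _ :=
  Polynomial k ⧸ Ideal.span {(X : Polynomial k) ^ d}

/-- The action of the sort-1 part (the free Lie algebra on the single generator `x⁽¹⁾`)
on `A_Θ·x⁽²⁾`, with `x⁽¹⁾` acting as multiplication by the image of `x`. -/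
noncomputable def rho (k : Type*) [Field k] (d : ℕ) :
    FreeLieAlgebra k Unit →ₗ⁅k⁆ Module.End k (AΘ k d) :=
  (Algebra.lsmul k k (AΘ k d) : AΘ k d →ₐ[k] Module.End k (AΘ k d)).toLieHom.comp
    (FreeLieAlgebra.lift k fun _ : Unit =>
      (Ideal.Quotient.mk (Ideal.span {(X : Polynomial k) ^ d}) X : AΘ k d))

/-!
Apply `s_F` to the two sides of `(λx⁽¹⁾) ∘ x⁽²⁾ = λ(x⁽¹⁾ ∘ x⁽²⁾)`: the first becomes
`b φ(λ) (x⁽¹⁾ ∘ x⁽²⁾)`, the second `ψ(λ) b (x⁽¹⁾ ∘ x⁽²⁾)`. In `F` the element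
`x⁽¹⁾ ∘ x⁽²⁾` is the class of `x` in `k[x]/(x^d)`, which is nonzero since `d > 1`,
so `φ(λ) = ψ(λ)`.
-/

theorem eq_of_semilinear_action_hom {k L M : Type*} [Field k] [AddCommGroup L] [Module k L]
    [AddCommGroup M] [Module k M] (ρ : L →ₗ[k] M →ₗ[k] M)
    {φ ψ : k → k} {b : k} (hb : b ≠ 0) {s₁ : L → L} {s₂ : M → M} {x : L} {v : M}
    (hx : s₁ x = x) (hv : s₂ v = v) (hxv : ρ x v ≠ 0)
    (hsmul₁ : ∀ (c : k) (l), s₁ (c • l) = φ c • s₁ l)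
    (hsmul₂ : ∀ (c : k) (w), s₂ (c • w) = ψ c • s₂ w)
    (hact : ∀ l w, s₂ (ρ l w) = b • ρ (s₁ l) (s₂ w)) :
    φ = ψ := by
  funext c
  have hxv' : s₂ (ρ x v) = b • ρ x v := by rw [hact, hx, hv]
  apply smul_left_injective k (smul_ne_zero hb hxv)
  calc φ c • b • ρ x v
      = s₂ (ρ (c • x) v) := by
        rw [hact, hsmul₁, hx, hv, map_smul, LinearMap.smul_apply, smul_comm]
    _ = ψ c • b • ρ x v := by
        rw [map_smul, LinearMap.smul_apply, hsmul₂, hxv']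

theorem Ideal.Quotient.mk_X_ne_zero_of_one_lt {R : Type*} [CommRing R] [Nontrivial R] {d : ℕ}
    (hd : 1 < d) : Ideal.Quotient.mk (Ideal.span {(X : R[X]) ^ d}) X ≠ 0 := by
  rw [Ne, Ideal.Quotient.eq_zero_iff_mem, Ideal.mem_span_singleton, X_pow_dvd_iff]
  exact fun h => by simpa using h 1 hd

theorem rho_of_apply (k : Type*) [Field k] (d : ℕ) (v : AΘ k d) :
    rho k d (FreeLieAlgebra.of k ()) v =
      Ideal.Quotient.mk (Ideal.span {(X : k[X]) ^ d}) X * v := by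
  simp [rho, FreeLieAlgebra.lift_of_apply]

theorem stmt_10_general (k : Type*) [Field k] (d : ℕ) (hd : 1 < d)
    (φ ψ : k ≃+* k) (b : k) (hb : b ≠ 0)
    (s₁ : FreeLieAlgebra k Unit → FreeLieAlgebra k Unit) (s₂ : AΘ k d → AΘ k d)
    -- `s_F` fixes the generators:
    (hgen₁ : s₁ (FreeLieAlgebra.of k ()) = FreeLieAlgebra.of k ())
    (hgen₂ : s₂ (1 : AΘ k d) = 1)
    -- `s_F : F → F*_W` is a homomorphism with respect to the verbal operations:
    (hsmul₁ : ∀ (c : k) (l), s₁ (c • l) = φ c • s₁ l)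
    (hsmul₂ : ∀ (c : k) (v), s₂ (c • v) = ψ c • s₂ v)
    (hact : ∀ l v, s₂ (rho k d l v) = b • rho k d (s₁ l) (s₂ v)) :
    φ = ψ := by
  have hxv : rho k d (FreeLieAlgebra.of k ()) 1 ≠ 0 := by
    rw [rho_of_apply, mul_one]
    exact Ideal.Quotient.mk_X_ne_zero_of_one_lt hd
  exact DFunLike.coe_injective <|
    eq_of_semilinear_action_hom (rho k d).toLinearMap hb hgen₁ hgen₂ hxv hsmul₁ hsmul₂ hact

/-- Let `Θ` be an action-type nondegenerate variety of Lie algebra representations over a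
field `k` of characteristic `0`, and `F = F_Θ(x⁽¹⁾, x⁽²⁾)` its free representation on one
generator of each sort, whose sort-1 part is the free Lie algebra on `x⁽¹⁾` and whose sort-2
part is `k[x]/(x^d)` with `d > 1`.  Suppose the verbal operations are given by
`w_{λ⁽¹⁾} = φ(λ)x⁽¹⁾`, `w_{λ⁽²⁾} = ψ(λ)x⁽²⁾` for field automorphisms `φ, ψ` of `k` and
`w_∘ = b(x⁽¹⁾ ∘ x⁽²⁾)` with `b ≠ 0`, the additive operations being unchanged.  If there is a
bijection `s_F = (s₁, s₂)` of `F` fixing the generators which is an isomorphism `F → F*_W`,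
then `φ = ψ`. -/
theorem stmt_10 (k : Type*) [Field k] [CharZero k] (d : ℕ) (hd : 1 < d)
    (φ ψ : k ≃+* k) (b : k) (hb : b ≠ 0)
    (s₁ : FreeLieAlgebra k Unit → FreeLieAlgebra k Unit) (s₂ : AΘ k d → AΘ k d)
    (hs₁bij : Function.Bijective s₁) (hs₂bij : Function.Bijective s₂)
    -- `s_F` fixes the generators:
    (hgen₁ : s₁ (FreeLieAlgebra.of k ()) = FreeLieAlgebra.of k ())
    (hgen₂ : s₂ (1 : AΘ k d) = 1)
    -- `s_F : F → F*_W` is a homomorphism with respect to the verbal operations: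
    (hadd₁ : ∀ u v, s₁ (u + v) = s₁ u + s₁ v)
    (hadd₂ : ∀ u v, s₂ (u + v) = s₂ u + s₂ v)
    (hsmul₁ : ∀ (c : k) (l), s₁ (c • l) = φ c • s₁ l)
    (hsmul₂ : ∀ (c : k) (v), s₂ (c • v) = ψ c • s₂ v)
    (hact : ∀ l v, s₂ (rho k d l v) = b • rho k d (s₁ l) (s₂ v)) :
    φ = ψ :=
  stmt_10_general k d hd φ ψ b hb s₁ s₂ hgen₁ hgen₂ hsmul₁ hsmul₂ hact
end

section
/- Let k be a field of characteristic 0 and A the free associative unital k-algebra on {x_1, x_2}. In the quotient A_Θ = A/S where S is the ideal of all elements of degree ≥ 6 (i.e., the ideal generated by all monomials of total degree 6), the images of e_1 = ι[x_1,[x_1,[[x_1,x_2],x_2]]] and e_2 = ι[[x_1,[x_1,x_2]],[x_1,x_2]] remain linearly independent, and for any t = λe_1 + e_2 with λ ∈ k, the two-sided ideal of A_Θ generated by t equals the k-span of t. -/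
/-!
Let `F d` be the span of the monomials of length at least `d`. These subspaces form a
multiplicative filtration, and `S = F 6`. Both `e₁` and `e₂` lie in `F 5`, and for `t ∈ F 5` we
have `a * t * b ≡ ε(a) ε(b) t (mod F 6)`, where `ε` is the augmentation, since `a - ε(a)` and
`b - ε(b)` lie in `F 1`. Hence the ideal generated by `t` is `k t` modulo `S`. Linear
independence modulo `F 6` is read off from the coefficients at two words of length `5`.
-/

/-- The two-sided ideal of the free associative unital `k`-algebra on `X` generated by a
set `G`, viewed as a `k`-submodule: the span of all products `a * g * b` with `g ∈ G`. -/
noncomputable def twoSidedIdealSpan (k : Type*) [Field k] (X : Type*) (G : Set (FreeAlgebra k X)) :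
    Submodule k (FreeAlgebra k X) :=
  Submodule.span k {x | ∃ a g b, g ∈ G ∧ x = a * g * b}

/-- The monomials of total degree `d` in the free associative unital `k`-algebra on `X`. -/
def degMonomials (k : Type*) [Field k] (X : Type*) (d : ℕ) : Set (FreeAlgebra k X) :=
  {x | ∃ w : Fin d → X, x = ((List.ofFn w).map (FreeAlgebra.ι k)).prod}

namespace FreeAlgebra

open Submodule

section Semiring

variable (R X : Type*) [CommSemiring R]

def degreeFiltration (d : ℕ) : Submodule R (FreeAlgebra R X) :=
  span R (basisFreeMonoid R X '' {w | d ≤ w.length})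

variable {R X}

theorem basisFreeMonoid_eq_symm_single (w : FreeMonoid X) :
    basisFreeMonoid R X w = equivMonoidAlgebraFreeMonoid.symm (MonoidAlgebra.single w 1) :=
  rfl

theorem basisFreeMonoid_mul (u v : FreeMonoid X) :
    basisFreeMonoid R X (u * v) = basisFreeMonoid R X u * basisFreeMonoid R X v := by
  simp only [basisFreeMonoid_eq_symm_single, ← map_mul, MonoidAlgebra.single_mul_single, one_mul]

theorem basisFreeMonoid_of (x : X) : basisFreeMonoid R X (.of x) = ι R x := by
  rw [basisFreeMonoid_eq_symm_single, AlgEquiv.symm_apply_eq]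
  simp [equivMonoidAlgebraFreeMonoid, MonoidAlgebra.of_apply]

theorem basisFreeMonoid_ofList (l : List X) :
    basisFreeMonoid R X (.ofList l) = (l.map (ι R)).prod := by
  induction l with
  | nil => simp [basisFreeMonoid_eq_symm_single, ← MonoidAlgebra.one_def]
  | cons x l ih =>
    rw [FreeMonoid.ofList_cons, basisFreeMonoid_mul, basisFreeMonoid_of, ih]
    rfl

theorem basisFreeMonoid_mem_degreeFiltration {d : ℕ} {w : FreeMonoid X} (h : d ≤ w.length) :
    basisFreeMonoid R X w ∈ degreeFiltration R X d :=
  subset_span ⟨w, h, rfl⟩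

theorem mem_degreeFiltration_zero (x : FreeAlgebra R X) : x ∈ degreeFiltration R X 0 := by
  simp [degreeFiltration, (basisFreeMonoid R X).span_eq]

theorem ι_mem_degreeFiltration_one (x : X) : ι R x ∈ degreeFiltration R X 1 := by
  rw [← basisFreeMonoid_of]
  exact basisFreeMonoid_mem_degreeFiltration (by simp)

theorem degreeFiltration_mul_le (m n : ℕ) :
    degreeFiltration R X m * degreeFiltration R X n ≤ degreeFiltration R X (m + n) := by
  rw [degreeFiltration, degreeFiltration, span_mul_span, span_le]
  rintro _ ⟨_, ⟨u, hu, rfl⟩, _, ⟨v, hv, rfl⟩, rfl⟩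
  change basisFreeMonoid R X u * basisFreeMonoid R X v ∈ _
  rw [← basisFreeMonoid_mul]
  exact basisFreeMonoid_mem_degreeFiltration (by rw [FreeMonoid.length_mul]; exact add_le_add hu hv)

theorem mul_mem_degreeFiltration {m n : ℕ} {x y : FreeAlgebra R X}
    (hx : x ∈ degreeFiltration R X m) (hy : y ∈ degreeFiltration R X n) :
    x * y ∈ degreeFiltration R X (m + n) :=
  degreeFiltration_mul_le m n (mul_mem_mul hx hy)

theorem repr_eq_zero_of_mem_degreeFiltration {d : ℕ} {x : FreeAlgebra R X}
    (hx : x ∈ degreeFiltration R X d) {w : FreeMonoid X} (hw : w.length < d) :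
    (basisFreeMonoid R X).repr x w = 0 := by
  suffices degreeFiltration R X d ≤ LinearMap.ker ((basisFreeMonoid R X).coord w) from this hx
  rw [degreeFiltration, span_le]
  rintro _ ⟨u, hu : d ≤ u.length, rfl⟩
  have : u ≠ w := by rintro rfl; omega
  simp [this]

end Semiring

section Ring

variable {R X : Type*} [CommRing R]

theorem lie_mem_degreeFiltration {m n : ℕ} {x y : FreeAlgebra R X}
    (hx : x ∈ degreeFiltration R X m) (hy : y ∈ degreeFiltration R X n) :
    ⁅x, y⁆ ∈ degreeFiltration R X (m + n) := by
  rw [Ring.lie_def]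
  exact sub_mem (mul_mem_degreeFiltration hx hy) (add_comm n m ▸ mul_mem_degreeFiltration hy hx)

theorem sub_algebraMapInv_smul_one_mem_degreeFiltration_one (a : FreeAlgebra R X) :
    a - algebraMapInv a • (1 : FreeAlgebra R X) ∈ degreeFiltration R X 1 := by
  induction a using FreeAlgebra.induction with
  | grade0 r => simp [Algebra.algebraMap_eq_smul_one]
  | grade1 x => simpa [algebraMapInv] using ι_mem_degreeFiltration_one x
  | mul a b ha hb =>
    have : a * b - algebraMapInv (a * b) • (1 : FreeAlgebra R X) =
        (a - algebraMapInv a • 1) * b + algebraMapInv a • (b - algebraMapInv b • 1) := by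
      simp only [map_mul, sub_mul, smul_sub, smul_mul_assoc, one_mul, smul_smul]
      abel
    rw [this]
    refine add_mem ?_ (smul_mem _ _ hb)
    simpa using mul_mem_degreeFiltration ha (mem_degreeFiltration_zero b)
  | add a b ha hb =>
    rw [map_add, add_smul, add_sub_add_comm]
    exact add_mem ha hb

theorem mul_mul_sub_smul_mem_degreeFiltration {d : ℕ} {t : FreeAlgebra R X}
    (ht : t ∈ degreeFiltration R X d) (a b : FreeAlgebra R X) :
    a * t * b - (algebraMapInv a * algebraMapInv b) • t ∈ degreeFiltration R X (d + 1) := by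
  have : a * t * b - (algebraMapInv a * algebraMapInv b) • t =
      (a - algebraMapInv a • 1) * t * b + algebraMapInv a • (t * (b - algebraMapInv b • 1)) := by
    simp only [sub_mul, mul_sub, smul_sub, smul_mul_assoc, mul_smul_comm, one_mul, mul_one,
      smul_smul]
    abel
  rw [this]
  refine add_mem ?_ (smul_mem _ _ (mul_mem_degreeFiltration ht
    (sub_algebraMapInv_smul_one_mem_degreeFiltration_one b)))
  simpa [add_comm] using mul_mem_degreeFiltration (mul_mem_degreeFiltration
    (sub_algebraMapInv_smul_one_mem_degreeFiltration_one a) ht) (mem_degreeFiltration_zero b)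

end Ring

section Truncation

variable {k X : Type*} [Field k]

theorem twoSidedIdealSpan_degMonomials (d : ℕ) :
    twoSidedIdealSpan k X (degMonomials k X d) = degreeFiltration k X d := by
  apply le_antisymm
  · rw [twoSidedIdealSpan, span_le]
    rintro _ ⟨a, _, b, ⟨w, rfl⟩, rfl⟩
    have hw : ((List.ofFn w).map (ι k)).prod ∈ degreeFiltration k X d := by
      rw [← basisFreeMonoid_ofList]
      exact basisFreeMonoid_mem_degreeFiltration (by simp [FreeMonoid.length])
    simpa using mul_mem_degreeFiltration
      (mul_mem_degreeFiltration (mem_degreeFiltration_zero a) hw) (mem_degreeFiltration_zero b)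
  · rw [degreeFiltration, span_le]
    rintro _ ⟨u, hu : d ≤ u.length, rfl⟩
    obtain ⟨w, hw⟩ : ∃ w : Fin d → X, List.ofFn w = u.toList.take d := by
      have hlen : (u.toList.take d).length = d := List.length_take_of_le hu
      generalize u.toList.take d = l at hlen
      subst hlen
      exact ⟨l.get, List.ofFn_get l⟩
    refine subset_span ⟨1, _, basisFreeMonoid k X (.ofList (u.toList.drop d)), ⟨w, rfl⟩, ?_⟩
    rw [one_mul, hw, ← basisFreeMonoid_ofList, ← basisFreeMonoid_mul, ← FreeMonoid.ofList_append,
      List.take_append_drop, FreeMonoid.ofList_toList]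

theorem twoSidedIdealSpan_singleton_sup_degreeFiltration {d : ℕ} {t : FreeAlgebra k X}
    (ht : t ∈ degreeFiltration k X d) :
    twoSidedIdealSpan k X {t} ⊔ degreeFiltration k X (d + 1) =
      span k {t} ⊔ degreeFiltration k X (d + 1) := by
  refine le_antisymm (sup_le ?_ le_sup_right) (sup_le_sup_right ?_ _)
  · rw [twoSidedIdealSpan, span_le]
    rintro _ ⟨a, g, b, hg, rfl⟩
    rw [Set.mem_singleton_iff.1 hg, SetLike.mem_coe,
      ← sub_add_cancel (a * t * b) ((algebraMapInv a * algebraMapInv b) • t)]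
    exact add_mem (mem_sup_right (mul_mul_sub_smul_mem_degreeFiltration ht a b))
      (mem_sup_left (smul_mem _ _ (mem_span_singleton_self t)))
  · rw [span_le, Set.singleton_subset_iff]
    exact subset_span ⟨1, t, 1, Set.mem_singleton t, by simp⟩

theorem linearIndependent_mkQ_pair_of_repr {d : ℕ} {x y : FreeAlgebra k X} {u v : FreeMonoid X}
    (hu : u.length < d) (hv : v.length < d) (hxu : (basisFreeMonoid k X).repr x u ≠ 0)
    (hyu : (basisFreeMonoid k X).repr y u = 0) (hyv : (basisFreeMonoid k X).repr y v ≠ 0) :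
    LinearIndependent k ![(degreeFiltration k X d).mkQ x, (degreeFiltration k X d).mkQ y] := by
  rw [LinearIndependent.pair_iff]
  intro s t hst
  have hmem : s • x + t • y ∈ degreeFiltration k X d := by
    rwa [← map_smul, ← map_smul, ← map_add, mkQ_apply, Quotient.mk_eq_zero] at hst
  obtain rfl : s = 0 := by simpa [hxu, hyu] using repr_eq_zero_of_mem_degreeFiltration hmem hu
  exact ⟨rfl, by simpa [hyv] using repr_eq_zero_of_mem_degreeFiltration hmem hv⟩

end Truncation

end FreeAlgebra

open FreeAlgebra in
theorem stmt_13_general (k : Type*) [Field k] :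
    letI x₁ : FreeAlgebra k (Fin 2) := FreeAlgebra.ι k 0
    letI x₂ : FreeAlgebra k (Fin 2) := FreeAlgebra.ι k 1
    letI e₁ : FreeAlgebra k (Fin 2) := ⁅x₁, ⁅x₁, ⁅⁅x₁, x₂⁆, x₂⁆⁆⁆
    letI e₂ : FreeAlgebra k (Fin 2) := ⁅⁅x₁, ⁅x₁, x₂⁆⁆, ⁅x₁, x₂⁆⁆
    letI S : Submodule k (FreeAlgebra k (Fin 2)) :=
      twoSidedIdealSpan k (Fin 2) (degMonomials k (Fin 2) 6)
    LinearIndependent k ![S.mkQ e₁, S.mkQ e₂] ∧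
      ∀ lam : k,
        twoSidedIdealSpan k (Fin 2) {lam • e₁ + e₂} ⊔ S =
          Submodule.span k {lam • e₁ + e₂} ⊔ S := by
  have hx₁ := ι_mem_degreeFiltration_one (R := k) (0 : Fin 2)
  have hx₂ := ι_mem_degreeFiltration_one (R := k) (1 : Fin 2)
  have he₁ := lie_mem_degreeFiltration hx₁
    (lie_mem_degreeFiltration hx₁ (lie_mem_degreeFiltration (lie_mem_degreeFiltration hx₁ hx₂) hx₂))
  have he₂ := lie_mem_degreeFiltration
    (lie_mem_degreeFiltration hx₁ (lie_mem_degreeFiltration hx₁ hx₂))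
    (lie_mem_degreeFiltration hx₁ hx₂)
  rw [twoSidedIdealSpan_degMonomials, show 6 = 5 + 1 from rfl]
  refine ⟨?_, fun lam ↦ twoSidedIdealSpan_singleton_sup_degreeFiltration
    (add_mem (Submodule.smul_mem _ lam he₁) he₂)⟩
  -- the coefficients of `e₁`, `e₂` at the words `x₁x₁x₁x₂x₂`, `x₁x₁x₂x₁x₂` are `(1, -2)`, `(0, 1)`
  refine linearIndependent_mkQ_pair_of_repr (u := .ofList [0, 0, 0, 1, 1])
    (v := .ofList [0, 0, 1, 0, 1]) (by decide) (by decide) ?_ ?_ ?_ <;>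
  simp only [Ring.lie_def, mul_sub, sub_mul, ← basisFreeMonoid_of, ← basisFreeMonoid_mul, map_sub,
    Module.Basis.repr_self, Finsupp.sub_apply] <;>
  simp [mul_assoc, ← FreeMonoid.toList.injective.eq_iff]

/-- In `A_Θ = A/S`, where `A = k⟨x₁,x₂⟩` and `S` is the two-sided ideal generated by all
monomials of total degree `6`, the images of the degree-(3,2) Lie elements
`e₁ = [x₁,[x₁,[[x₁,x₂],x₂]]]` and `e₂ = [[x₁,[x₁,x₂]],[x₁,x₂]]` remain linearly
independent, and for every `λ ∈ k` the two-sided ideal of `A_Θ` generated by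
`t = λe₁ + e₂` equals the `k`-span of `t` (equivalently, in `A`, adding `S` to the
two-sided ideal generated by `t` gives no more than adding `S` to `sp_k(t)`). -/
theorem stmt_13 (k : Type*) [Field k] [CharZero k] :
    letI x₁ : FreeAlgebra k (Fin 2) := FreeAlgebra.ι k 0
    letI x₂ : FreeAlgebra k (Fin 2) := FreeAlgebra.ι k 1
    letI e₁ : FreeAlgebra k (Fin 2) := ⁅x₁, ⁅x₁, ⁅⁅x₁, x₂⁆, x₂⁆⁆⁆
    letI e₂ : FreeAlgebra k (Fin 2) := ⁅⁅x₁, ⁅x₁, x₂⁆⁆, ⁅x₁, x₂⁆⁆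
    letI S : Submodule k (FreeAlgebra k (Fin 2)) :=
      twoSidedIdealSpan k (Fin 2) (degMonomials k (Fin 2) 6)
    LinearIndependent k ![S.mkQ e₁, S.mkQ e₂] ∧
      ∀ lam : k,
        twoSidedIdealSpan k (Fin 2) {lam • e₁ + e₂} ⊔ S =
          Submodule.span k {lam • e₁ + e₂} ⊔ S :=
  stmt_13_general k
end

section
/- Let F be the absolutely free representation on X = X^(1) ∪ X^(2), F_Θ = F/Id_Θ(X) the relatively free representation of a variety Θ defined by identities f·x^(2) = 0 with f polyhomogeneous with integer coefficients, and let s̃_F : F → F*_W be the isomorphism fixing X determined by the system of words W with parameters a ∈ k^*, φ ∈ Aut(k). Then s̃_F maps the fully invariant congruence Id_Θ(X) into itself — specifically s̃_F(f x^(2)) = a^{deg f} · f x^(2) for polyhomogeneous f with integer coefficients — and hence induces an isomorphism s_{F_Θ} : F_Θ → (F_Θ)*_W fixing the generators. -/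
/-! Each monomial `x₁ ⋯ xₙ · y` is built from the generator `y` by `n` applications of the
action `∘`, each of which `s̃_F` scales by `a` while fixing the generator `xᵢ`; an integer
combination of monomials of length `n` is then scaled by `aⁿ` because `s̃_F` is additive. -/

attribute [local instance 100] LieRing.ofAssociativeRing

/-- The action of the free Lie algebra `L(X¹)` on the sort-2 part
`M = ⊕_{y ∈ X²} A(X¹)·y` of the absolutely free representation, `l ∘ v = ι(l)v` via the
canonical embedding into the free associative algebra. -/
noncomputable def freeRepAction (k : Type*) [Field k] (X₁ X₂ : Type*) :
    FreeLieAlgebra k X₁ →ₗ⁅k⁆ Module.End k (X₂ →₀ FreeAlgebra k X₁) :=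
  (Algebra.lsmul k k (X₂ →₀ FreeAlgebra k X₁) :
      FreeAlgebra k X₁ →ₐ[k] Module.End k (X₂ →₀ FreeAlgebra k X₁)).toLieHom.comp
    (FreeLieAlgebra.lift k (FreeAlgebra.ι k))

section

variable {k : Type*} [Field k] {X₁ X₂ : Type*}

theorem freeRepAction_of_single (x : X₁) (y : X₂) (m : FreeAlgebra k X₁) :
    freeRepAction k X₁ X₂ (FreeLieAlgebra.of k x) (Finsupp.single y m) =
      Finsupp.single y (FreeAlgebra.ι k x * m) := by
  simp [freeRepAction, Finsupp.smul_single, smul_eq_mul]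

theorem single_list_prod_cons (x : X₁) (w : List X₁) (y : X₂) :
    Finsupp.single y ((x :: w).map (FreeAlgebra.ι k)).prod =
      freeRepAction k X₁ X₂ (FreeLieAlgebra.of k x)
        (Finsupp.single y (w.map (FreeAlgebra.ι k)).prod) := by
  rw [freeRepAction_of_single, List.map_cons, List.prod_cons]

theorem map_single_list_prod {a : k}
    {s₁ : FreeLieAlgebra k X₁ → FreeLieAlgebra k X₁}
    {s₂ : (X₂ →₀ FreeAlgebra k X₁) → (X₂ →₀ FreeAlgebra k X₁)}
    (hgen₁ : ∀ x : X₁, s₁ (FreeLieAlgebra.of k x) = FreeLieAlgebra.of k x)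
    (hgen₂ : ∀ y : X₂, s₂ (Finsupp.single y 1) = Finsupp.single y 1)
    (hact : ∀ l v, s₂ (freeRepAction k X₁ X₂ l v) =
      a • freeRepAction k X₁ X₂ (s₁ l) (s₂ v))
    (w : List X₁) (y : X₂) :
    s₂ (Finsupp.single y (w.map (FreeAlgebra.ι k)).prod) =
      a ^ w.length • Finsupp.single y (w.map (FreeAlgebra.ι k)).prod := by
  induction w with
  | nil => simpa using hgen₂ y
  | cons x w ih =>
    rw [single_list_prod_cons, hact, hgen₁, ih, map_smul, smul_smul, List.length_cons, pow_succ']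

end

theorem stmt_15_general (k : Type*) [Field k] (X₁ X₂ : Type*)
    (a : k)
    (s₁ : FreeLieAlgebra k X₁ → FreeLieAlgebra k X₁)
    (s₂ : (X₂ →₀ FreeAlgebra k X₁) → (X₂ →₀ FreeAlgebra k X₁))
    -- `s̃_F` fixes the generators:
    (hgen₁ : ∀ x : X₁, s₁ (FreeLieAlgebra.of k x) = FreeLieAlgebra.of k x)
    (hgen₂ : ∀ y : X₂, s₂ (Finsupp.single y 1) = Finsupp.single y 1)
    -- `s̃_F : F → F*_W` is an isomorphism onto the verbal operations:
    (hadd₂ : ∀ u v, s₂ (u + v) = s₂ u + s₂ v)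
    (hact : ∀ l v, s₂ (freeRepAction k X₁ X₂ l v) =
      a • freeRepAction k X₁ X₂ (s₁ l) (s₂ v)) :
    -- conclusion: `s̃_F (f x⁽²⁾) = a^{deg f} · f x⁽²⁾` for every polyhomogeneous `f` of
    -- multidegree `μ` with integer coefficients
    ∀ (μ : Multiset X₁) (f : FreeAlgebra k X₁),
      f ∈ Submodule.span ℤ {x : FreeAlgebra k X₁ |
          ∃ w : List X₁, (↑w : Multiset X₁) = μ ∧ x = (w.map (FreeAlgebra.ι k)).prod} →
      ∀ y : X₂, s₂ (Finsupp.single y f) = a ^ Multiset.card μ • Finsupp.single y f := by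
  intro μ f hf y
  let single_y := Finsupp.singleAddHom (M := FreeAlgebra k X₁) y
  let lhs := ((AddMonoidHom.mk' s₂ hadd₂).comp single_y).toIntLinearMap
  let rhs := ((DistribSMul.toAddMonoidHom _ (a ^ Multiset.card μ)).comp single_y).toIntLinearMap
  refine LinearMap.eqOn_span (f := lhs) (g := rhs) ?_ hf
  rintro _ ⟨w, rfl, rfl⟩
  exact map_single_list_prod hgen₁ hgen₂ hact w y

/-- Let `F` be the absolutely free representation on `X = X¹ ∪ X²` and let
`s̃_F = (s₁, s₂) : F → F*_W` be a bijection fixing the generators which is an isomorphism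
onto `F` equipped with the verbal operations determined by `a ∈ k^*` and `φ ∈ Aut(k)`
(`w_{[,]} = a[x₁,x₂]`, `w_∘ = a(x₁ ∘ x₂)`, `w_λ = φ(λ)x` in both sorts, additive operations
unchanged).  Then `s̃_F` multiplies every element `f·x⁽²⁾` of the congruence `Id_Θ(X)`, with
`f` polyhomogeneous of multidegree `μ` with integer coefficients, by `a^{deg f}`:
`s̃_F(f x⁽²⁾) = a^{deg f}·(f x⁽²⁾)` — hence it maps `Id_Θ(X)` into itself and induces an
isomorphism `s_{F_Θ} : F_Θ → (F_Θ)*_W` fixing the generators. -/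
theorem stmt_15 (k : Type*) [Field k] [CharZero k] (X₁ X₂ : Type*)
    (a : k) (ha : a ≠ 0) (φ : k ≃+* k)
    (s₁ : FreeLieAlgebra k X₁ → FreeLieAlgebra k X₁)
    (s₂ : (X₂ →₀ FreeAlgebra k X₁) → (X₂ →₀ FreeAlgebra k X₁))
    (hs₁bij : Function.Bijective s₁) (hs₂bij : Function.Bijective s₂)
    -- `s̃_F` fixes the generators:
    (hgen₁ : ∀ x : X₁, s₁ (FreeLieAlgebra.of k x) = FreeLieAlgebra.of k x)
    (hgen₂ : ∀ y : X₂, s₂ (Finsupp.single y 1) = Finsupp.single y 1)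
    -- `s̃_F : F → F*_W` is an isomorphism onto the verbal operations:
    (hadd₁ : ∀ u v, s₁ (u + v) = s₁ u + s₁ v)
    (hadd₂ : ∀ u v, s₂ (u + v) = s₂ u + s₂ v)
    (hsmul₁ : ∀ (c : k) (l), s₁ (c • l) = φ c • s₁ l)
    (hsmul₂ : ∀ (c : k) (v), s₂ (c • v) = φ c • s₂ v)
    (hbracket : ∀ u v, s₁ ⁅u, v⁆ = a • ⁅s₁ u, s₁ v⁆)
    (hact : ∀ l v, s₂ (freeRepAction k X₁ X₂ l v) =
      a • freeRepAction k X₁ X₂ (s₁ l) (s₂ v)) :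
    -- conclusion: `s̃_F (f x⁽²⁾) = a^{deg f} · f x⁽²⁾` for every polyhomogeneous `f` of
    -- multidegree `μ` with integer coefficients
    ∀ (μ : Multiset X₁) (f : FreeAlgebra k X₁),
      f ∈ Submodule.span ℤ {x : FreeAlgebra k X₁ |
          ∃ w : List X₁, (↑w : Multiset X₁) = μ ∧ x = (w.map (FreeAlgebra.ι k)).prod} →
      ∀ y : X₂, s₂ (Finsupp.single y f) = a ^ Multiset.card μ • Finsupp.single y f :=
  stmt_15_general k X₁ X₂ a s₁ s₂ hgen₁ hgen₂ hadd₂ hact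
end

section
/- In the variety of all Lie algebra representations over a field k of characteristic 0, the words for the Lie bracket and action operations satisfying the strongly-stable automorphism conditions must be of the form w_{[,]} = a[x_1^(1), x_2^(1)] and w_∘ = a(x^(1) ∘ x^(2)) with the same nonzero scalar a ∈ k^*: the equality of scalars follows from the identity [x_1, x_2] ∘ v = x_1 ∘ (x_2 ∘ v) − x_2 ∘ (x_1 ∘ v). Concretely: if a, b ∈ k^* and the map induced by x_1 ↦ x_1, x_2 ↦ x_2, v ↦ v intertwines the operations [x_1,x_2]' := a[x_1,x_2] and x∘'v := b(x∘v) so that the representation axiom [x_1,x_2]' ∘' v = x_1 ∘' (x_2 ∘' v) − x_2 ∘' (x_1 ∘' v) holds in the free representation, then a = b. -/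
/-!
Under the twisted operations the two sides of the representation axiom are `ab • [x₁, x₂] v` and
`b² • [x₁, x₂] v`. In the free algebra `x₁x₂ - x₂x₁` is a difference of two distinct words of the
free monoid, hence nonzero, so `ab = b²` and `a = b`.
-/

attribute [local instance 100] LieRing.ofAssociativeRing

theorem FreeAlgebra.ι_mul_ι_sub_ι_mul_ι_ne_zero {R X : Type*} [CommRing R] [Nontrivial R]
    {i j : X} (hij : i ≠ j) : ι R i * ι R j - ι R j * ι R i ≠ 0 := by
  rw [Ne, sub_eq_zero, ← equivMonoidAlgebraFreeMonoid.injective.eq_iff]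
  simp only [equivMonoidAlgebraFreeMonoid, AlgEquiv.ofAlgHom_apply, map_mul, lift_ι_apply,
    MonoidAlgebra.of_apply, MonoidAlgebra.single_mul_single, mul_one]
  rw [MonoidAlgebra.single_left_inj one_ne_zero]
  intro h
  exact hij (List.cons.inj (congrArg FreeMonoid.toList h)).1

theorem eq_of_smul_commutator_mul_eq {k A : Type*} [Field k] [Ring A] [Algebra k A]
    {a b : k} (hb : b ≠ 0) {x y v : A} (hv : (x * y - y * x) * v ≠ 0)
    (h : b • ((a • (x * y - y * x)) * v) = b • (x * (b • (y * v))) - b • (y * (b • (x * v)))) :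
    a = b := by
  have hscaled : (b * a) • ((x * y - y * x) * v) = (b * b) • ((x * y - y * x) * v) := by
    simp only [smul_mul_assoc, mul_smul_comm, smul_smul] at h
    rw [h, ← smul_sub, sub_mul, mul_assoc, mul_assoc]
  exact mul_left_cancel₀ hb (smul_left_injective k hv hscaled)

theorem stmt_16_general (k : Type*) [Field k] (a b : k) (hb : b ≠ 0)
    (j : FreeLieAlgebra k (Fin 2) →ₗ⁅k⁆ FreeAlgebra k (Fin 2))
    (hj : j = FreeLieAlgebra.lift k (FreeAlgebra.ι k))
    (haxiom :
      b • (j (a • ⁅FreeLieAlgebra.of k (0 : Fin 2), FreeLieAlgebra.of k (1 : Fin 2)⁆) * 1) =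
        b • (j (FreeLieAlgebra.of k (0 : Fin 2)) * (b • (j (FreeLieAlgebra.of k (1 : Fin 2)) * 1))) -
          b • (j (FreeLieAlgebra.of k (1 : Fin 2)) * (b • (j (FreeLieAlgebra.of k (0 : Fin 2)) * 1)))) :
    a = b := by
  subst hj
  rw [map_smul, LieHom.map_lie, FreeLieAlgebra.lift_of_apply, FreeLieAlgebra.lift_of_apply,
    Ring.lie_def] at haxiom
  refine eq_of_smul_commutator_mul_eq hb ?_ haxiom
  rw [mul_one]
  exact FreeAlgebra.ι_mul_ι_sub_ι_mul_ι_ne_zero (by decide)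

/-- In the free representation `F(x₁⁽¹⁾, x₂⁽¹⁾, x⁽²⁾) = (L, A·v)` of Lie algebra
representations over a field `k` of characteristic `0` (with `L` the free Lie algebra on two
generators and `A` its universal enveloping algebra, acting on `v = 1 ∈ A` by left
multiplication via the canonical embedding `j : L → A`), if the twisted operations
`[x₁,x₂]' = a•[x₁,x₂]` and `x ∘' w = b•(j x * w)` satisfy the representation axiom
`[x₁,x₂]' ∘' v = x₁ ∘' (x₂ ∘' v) − x₂ ∘' (x₁ ∘' v)`, then `a = b`. -/
theorem stmt_16 (k : Type*) [Field k] [CharZero k] (a b : k) (ha : a ≠ 0) (hb : b ≠ 0)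
    (j : FreeLieAlgebra k (Fin 2) →ₗ⁅k⁆ FreeAlgebra k (Fin 2))
    (hj : j = FreeLieAlgebra.lift k (FreeAlgebra.ι k))
    (haxiom :
      b • (j (a • ⁅FreeLieAlgebra.of k (0 : Fin 2), FreeLieAlgebra.of k (1 : Fin 2)⁆) * 1) =
        b • (j (FreeLieAlgebra.of k (0 : Fin 2)) * (b • (j (FreeLieAlgebra.of k (1 : Fin 2)) * 1))) -
          b • (j (FreeLieAlgebra.of k (1 : Fin 2)) * (b • (j (FreeLieAlgebra.of k (0 : Fin 2)) * 1)))) :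
    a = b :=
  stmt_16_general k a b hb j hj haxiom
end
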